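/- Let A, B ⊆ Ω be measurable and let (u_A, y_A, p_A) and (u_B, y_B, p_B) be solutions of (P_A) and (P_B). Then μ‖u_B − u_A‖²_{L²(Ω)} + ‖y_B − y_A‖_Y² ≤ ∫_Ω (χ_A − χ_B)·(p_A·u_B − p_B·u_A) dx, where μ ≥ 0 is the strong convexity modulus of g (the inequality also holds with μ = 0 if g is merely convex). -/

import Mathlib

/-! Each control `u_C` minimizes `J(·, C)`, whose tracking part `½‖S(χ_C u) − y_d‖²` is a quadratic
and whose control cost `G(u) = ∫ g(u)` inherits the `μ`-strong convexity of `g`. Comparing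
`J(u_C, C)` with `J(u_C + λ(v − u_C), C)`, dividing by `λ` and letting `λ → 0` gives the
first-order condition `μ/2 ‖v − u_C‖² + G(u_C) ≤ G(v) + ⟪p_C, χ_C (v − u_C)⟫`.
Adding it for `(A, v = u_B)` and `(B, v = u_A)` cancels `G`, and what remains differs from the
right-hand side by `⟪p_A − p_B, χ_A u_A − χ_B u_B⟫ = ‖y_A − y_B‖²`. -/

open MeasureTheory ENNReal Set Filter Metric Topology
open scoped Classical symmDiff NNReal

noncomputable section

namespace L0Control

variable {α : Type*} [MeasurableSpace α]

/-- The characteristic function `χ_A` of a set `A`, as a real-valued function. -/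
def chi (A : Set α) (x : α) : ℝ := A.indicator (fun _ => (1 : ℝ)) x

/-- Pointwise multiplication of `u ∈ L²(μ)` by the characteristic function of `A`,
as an element of `L²(μ)` (junk value `0` if `A` is not measurable). -/
def chiMul {μ : Measure α} (A : Set α) (u : Lp ℝ 2 μ) : Lp ℝ 2 μ :=
  if hA : MeasurableSet A then
    MemLp.toLp (A.indicator (u : α → ℝ)) ((Lp.memLp u).indicator hA)
  else 0

variable {Y : Type*} [NormedAddCommGroup Y] [InnerProductSpace ℝ Y]

/-- The objective functional
`J(u, A) = ½‖S(χ_A u) − y_d‖² + ∫_Ω (g(u(x)) + χ_A(x) β(x)) dx`,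
with values in `EReal` (the `g`-part may be `+∞`). -/
def Jfun {μ : Measure α} (S : Lp ℝ 2 μ →L[ℝ] Y) (yd : Y) (g : ℝ → ℝ≥0∞) (β : α → ℝ)
    (u : Lp ℝ 2 μ) (A : Set α) : EReal :=
  ((2⁻¹ * ‖S (chiMul A u) - yd‖ ^ 2 + ∫ x in A, β x ∂μ : ℝ) : EReal)
    + ((∫⁻ x, g (u x) ∂μ : ℝ≥0∞) : EReal)

/-- `u` minimizes `J(·, A)` over `L²(μ)`. -/
def IsMinimizer {μ : Measure α} (S : Lp ℝ 2 μ →L[ℝ] Y) (yd : Y) (g : ℝ → ℝ≥0∞) (β : α → ℝ)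
    (A : Set α) (u : Lp ℝ 2 μ) : Prop :=
  ∀ v : Lp ℝ 2 μ, Jfun S yd g β u A ≤ Jfun S yd g β v A

/-- `(u, y, p)` is a solution triple of the problem `(P_A)`:
`u` minimizes `J(·, A)`, `y = S(χ_A u)` is the state and `p = S*(y − y_d)` the adjoint state. -/
def IsSolution {μ : Measure α} [CompleteSpace Y] (S : Lp ℝ 2 μ →L[ℝ] Y) (yd : Y)
    (g : ℝ → ℝ≥0∞) (β : α → ℝ) (A : Set α) (u : Lp ℝ 2 μ) (y : Y) (p : Lp ℝ 2 μ) : Prop :=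
  IsMinimizer S yd g β A u ∧ y = S (chiMul A u) ∧
    p = ContinuousLinearMap.adjoint S (y - yd)

/-- The value function `J(A) = inf_{u ∈ L²} J(u, A)`. -/
def Jval {μ : Measure α} (S : Lp ℝ 2 μ →L[ℝ] Y) (yd : Y) (g : ℝ → ℝ≥0∞) (β : α → ℝ)
    (A : Set α) : EReal :=
  ⨅ u : Lp ℝ 2 μ, Jfun S yd g β u A

/-- `H̄(p) = min_{u ∈ ℝ} (p·u + g(u)) = −g*(−p)`, with values in `EReal`. -/
def Hbar (g : ℝ → ℝ≥0∞) (p : ℝ) : EReal :=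
  ⨅ u : ℝ, ((p * u : ℝ) : EReal) + (g u : EReal)

/-- `H̄(p)` as a real number (it is finite under the standing assumptions). -/
def HbarR (g : ℝ → ℝ≥0∞) (p : ℝ) : ℝ := (Hbar g p).toReal

/-- Absolute value on `EReal`. -/
def eabs (x : EReal) : EReal := max x (-x)

end L0Control

open scoped InnerProductSpace

theorem le_of_forall_mem_Ioo_le_add_mul {a b c : ℝ} (h : ∀ l ∈ Ioo (0 : ℝ) 1, a ≤ b + l * c) :
    a ≤ b := by
  have hlim : Tendsto (fun l : ℝ => b + l * c) (𝓝[>] 0) (𝓝 (b + 0 * c)) :=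
    tendsto_const_nhds.add ((tendsto_nhdsWithin_of_tendsto_nhds tendsto_id).mul_const c)
  rw [zero_mul, add_zero] at hlim
  refine ge_of_tendsto hlim ?_
  filter_upwards [Ioo_mem_nhdsGT (zero_lt_one' ℝ)] with l hl using h l hl

theorem inner_adjoint_sub_adjoint {E Y : Type*} [NormedAddCommGroup E] [InnerProductSpace ℝ E]
    [CompleteSpace E] [NormedAddCommGroup Y] [InnerProductSpace ℝ Y] [CompleteSpace Y]
    (S : E →L[ℝ] Y) (yd : Y) (q₁ q₂ : E) :
    ⟪ContinuousLinearMap.adjoint S (S q₁ - yd) - ContinuousLinearMap.adjoint S (S q₂ - yd),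
      q₁ - q₂⟫_ℝ = ‖S q₁ - S q₂‖ ^ 2 := by
  rw [← map_sub, ContinuousLinearMap.adjoint_inner_left, sub_sub_sub_cancel_right, map_sub,
    real_inner_self_eq_norm_sq]

namespace MeasureTheory.L2

variable {α : Type*} [MeasurableSpace α] {μ : Measure α}

theorem real_inner_eq_integral_mul (p q : Lp ℝ 2 μ) : ⟪p, q⟫_ℝ = ∫ x, p x * q x ∂μ := by
  simp only [inner_def, Real.inner_apply]

theorem integrable_mul (p q : Lp ℝ 2 μ) : Integrable (fun x => p x * q x) μ := by
  simpa only [Real.inner_apply] using integrable_inner (𝕜 := ℝ) p q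

theorem lintegral_ofReal_sq (f : Lp ℝ 2 μ) :
    ∫⁻ x, ENNReal.ofReal (f x ^ 2) ∂μ = ENNReal.ofReal (‖f‖ ^ 2) := by
  have hint : Integrable (fun x => f x ^ 2) μ := by simpa only [sq] using integrable_mul f f
  rw [← real_inner_self_eq_norm_sq, real_inner_eq_integral_mul]
  simp_rw [← sq]
  rw [ofReal_integral_eq_lintegral_ofReal hint (Eventually.of_forall fun x => sq_nonneg (f x))]

end MeasureTheory.L2

namespace L0Control

variable {α : Type*} [MeasurableSpace α] {μ : Measure α}

theorem chiMul_ae_eq {A : Set α} (hA : MeasurableSet A) (u : Lp ℝ 2 μ) :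
    chiMul A u =ᵐ[μ] A.indicator u := by
  simp only [chiMul, dif_pos hA]
  exact MemLp.coeFn_toLp _

theorem chi_mul_ae_eq_chiMul {A : Set α} (hA : MeasurableSet A) (u : Lp ℝ 2 μ) :
    (fun x => chi A x * u x) =ᵐ[μ] chiMul A u := by
  filter_upwards [chiMul_ae_eq hA u] with x hx
  by_cases hxA : x ∈ A <;> simp [chi, hx, hxA]

theorem chiMul_add {A : Set α} (hA : MeasurableSet A) (u v : Lp ℝ 2 μ) :
    chiMul A (u + v) = chiMul A u + chiMul A v := by
  apply Lp.ext
  filter_upwards [chiMul_ae_eq hA (u + v), chiMul_ae_eq hA u, chiMul_ae_eq hA v,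
    Lp.coeFn_add u v, Lp.coeFn_add (chiMul A u) (chiMul A v)] with x h h₁ h₂ h₃ h₄
  rw [h, h₄, Pi.add_apply, h₁, h₂]
  by_cases hx : x ∈ A
  · simp only [indicator_of_mem hx, h₃, Pi.add_apply]
  · simp only [indicator_of_notMem hx, add_zero]

theorem chiMul_smul {A : Set α} (hA : MeasurableSet A) (c : ℝ) (u : Lp ℝ 2 μ) :
    chiMul A (c • u) = c • chiMul A u := by
  apply Lp.ext
  filter_upwards [chiMul_ae_eq hA (c • u), chiMul_ae_eq hA u,
    Lp.coeFn_smul c u, Lp.coeFn_smul c (chiMul A u)] with x h h₁ h₂ h₃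
  rw [h, h₃, Pi.smul_apply, h₁]
  by_cases hx : x ∈ A
  · simp only [indicator_of_mem hx, h₂, Pi.smul_apply]
  · simp only [indicator_of_notMem hx, smul_zero]

theorem chiMul_sub {A : Set α} (hA : MeasurableSet A) (u v : Lp ℝ 2 μ) :
    chiMul A (u - v) = chiMul A u - chiMul A v := by
  apply Lp.ext
  filter_upwards [chiMul_ae_eq hA (u - v), chiMul_ae_eq hA u, chiMul_ae_eq hA v,
    Lp.coeFn_sub u v, Lp.coeFn_sub (chiMul A u) (chiMul A v)] with x h h₁ h₂ h₃ h₄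
  rw [h, h₄, Pi.sub_apply, h₁, h₂]
  by_cases hx : x ∈ A
  · simp only [indicator_of_mem hx, h₃, Pi.sub_apply]
  · simp only [indicator_of_notMem hx, sub_zero]

theorem integral_chi_sub_chi_mul {A B : Set α} (hA : MeasurableSet A) (hB : MeasurableSet B)
    (p u p' u' : Lp ℝ 2 μ) :
    ∫ x, (chi A x - chi B x) * (p x * u x - p' x * u' x) ∂μ
      = ⟪p, chiMul A u - chiMul B u⟫_ℝ - ⟪p', chiMul A u' - chiMul B u'⟫_ℝ := by
  rw [L2.real_inner_eq_integral_mul, L2.real_inner_eq_integral_mul,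
    ← integral_sub (L2.integrable_mul _ _) (L2.integrable_mul _ _)]
  refine integral_congr_ae ?_
  filter_upwards [chi_mul_ae_eq_chiMul hA u, chi_mul_ae_eq_chiMul hB u,
    chi_mul_ae_eq_chiMul hA u', chi_mul_ae_eq_chiMul hB u',
    Lp.coeFn_sub (chiMul A u) (chiMul B u), Lp.coeFn_sub (chiMul A u') (chiMul B u')]
    with x hAu hBu hAu' hBu' h h'
  simp only [h, h', Pi.sub_apply, ← hAu, ← hBu, ← hAu', ← hBu']
  ring

section StrongConvexity

def IsStronglyConvex (μ₀ : ℝ) (g : ℝ → ℝ≥0∞) : Prop :=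
  ∀ u v l : ℝ, l ∈ Ioo (0 : ℝ) 1 →
    ENNReal.ofReal (μ₀ / 2 * l * (1 - l) * (u - v) ^ 2) + g (l * u + (1 - l) * v)
      ≤ ENNReal.ofReal l * g u + ENNReal.ofReal (1 - l) * g v

variable {g : ℝ → ℝ≥0∞} {μ₀ : ℝ}

theorem lintegral_comp_combination_le (hg : Measurable g) (hμ₀ : 0 ≤ μ₀)
    (hg_sconv : IsStronglyConvex μ₀ g) (u v : Lp ℝ 2 μ) {l : ℝ} (hl : l ∈ Ioo (0 : ℝ) 1) :
    ENNReal.ofReal (μ₀ / 2 * l * (1 - l) * ‖u - v‖ ^ 2) + ∫⁻ x, g ((l • u + (1 - l) • v) x) ∂μ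
      ≤ ENNReal.ofReal l * ∫⁻ x, g (u x) ∂μ + ENNReal.ofReal (1 - l) * ∫⁻ x, g (v x) ∂μ := by
  have hc : 0 ≤ μ₀ / 2 * l * (1 - l) := by
    have := hl.1; have := hl.2; positivity
  have hmeas : ∀ w : Lp ℝ 2 μ, AEMeasurable (fun x => g (w x)) μ := fun w =>
    hg.comp_aemeasurable (Lp.aestronglyMeasurable w).aemeasurable
  have hquad : ENNReal.ofReal (μ₀ / 2 * l * (1 - l) * ‖u - v‖ ^ 2)
      = ∫⁻ x, ENNReal.ofReal (μ₀ / 2 * l * (1 - l) * (u x - v x) ^ 2) ∂μ := by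
    simp_rw [ENNReal.ofReal_mul hc]
    rw [lintegral_const_mul' _ _ ofReal_ne_top, ← L2.lintegral_ofReal_sq]
    congr 1
    refine lintegral_congr_ae ?_
    filter_upwards [Lp.coeFn_sub u v] with x hx
    rw [hx, Pi.sub_apply]
  rw [hquad, ← lintegral_add_right' _ (hmeas _), ← lintegral_const_mul'' _ (hmeas u),
    ← lintegral_const_mul'' _ (hmeas v), ← lintegral_add_left' ((hmeas u).const_mul _)]
  refine lintegral_mono_ae ?_
  filter_upwards [Lp.coeFn_add (l • u) ((1 - l) • v), Lp.coeFn_smul l u,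
    Lp.coeFn_smul (1 - l) v] with x hw hu hv
  rw [hw, Pi.add_apply, hu, hv]
  exact hg_sconv (u x) (v x) l hl

theorem toReal_lintegral_comp_combination_le (hg : Measurable g) (hμ₀ : 0 ≤ μ₀)
    (hg_sconv : IsStronglyConvex μ₀ g) {u v : Lp ℝ 2 μ} {l : ℝ} (hl : l ∈ Ioo (0 : ℝ) 1)
    (hu : ∫⁻ x, g (u x) ∂μ ≠ ⊤) (hv : ∫⁻ x, g (v x) ∂μ ≠ ⊤) :
    ∫⁻ x, g ((l • u + (1 - l) • v) x) ∂μ ≠ ⊤ ∧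
      μ₀ / 2 * l * (1 - l) * ‖u - v‖ ^ 2 + (∫⁻ x, g ((l • u + (1 - l) • v) x) ∂μ).toReal
        ≤ l * (∫⁻ x, g (u x) ∂μ).toReal + (1 - l) * (∫⁻ x, g (v x) ∂μ).toReal := by
  have h := lintegral_comp_combination_le hg hμ₀ hg_sconv u v hl
  have hrhs : ENNReal.ofReal l * ∫⁻ x, g (u x) ∂μ + ENNReal.ofReal (1 - l) * ∫⁻ x, g (v x) ∂μ
      ≠ ⊤ := by finiteness
  have hw := ne_top_of_le_ne_top hrhs (le_add_self.trans h)
  refine ⟨hw, ?_⟩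
  have hc : 0 ≤ μ₀ / 2 * l * (1 - l) * ‖u - v‖ ^ 2 := by
    have := hl.1; have := hl.2; positivity
  have := ENNReal.toReal_mono hrhs h
  rwa [ENNReal.toReal_add ofReal_ne_top hw, ENNReal.toReal_add (by finiteness) (by finiteness),
    toReal_mul, toReal_mul, toReal_ofReal hc, toReal_ofReal hl.1.le,
    toReal_ofReal (sub_nonneg.2 hl.2.le)] at this

end StrongConvexity

section Minimizer

variable {Y : Type*} [NormedAddCommGroup Y] [InnerProductSpace ℝ Y]
  {S : Lp ℝ 2 μ →L[ℝ] Y} {yd : Y} {g : ℝ → ℝ≥0∞} {β : α → ℝ} {A : Set α} {u v : Lp ℝ 2 μ}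

theorem Jfun_eq_coe_of_lintegral_ne_top (hu : ∫⁻ x, g (u x) ∂μ ≠ ⊤) :
    Jfun S yd g β u A = ((2⁻¹ * ‖S (chiMul A u) - yd‖ ^ 2 + ∫ x in A, β x ∂μ
      + (∫⁻ x, g (u x) ∂μ).toReal : ℝ) : EReal) := by
  rw [Jfun, ← EReal.coe_ennreal_toReal hu, ← EReal.coe_add]

theorem Jfun_eq_top_of_lintegral_eq_top (hu : ∫⁻ x, g (u x) ∂μ = ⊤) : Jfun S yd g β u A = ⊤ := by
  rw [Jfun, hu, EReal.coe_ennreal_top, EReal.add_top_of_ne_bot (EReal.coe_ne_bot _)]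

theorem lintegral_comp_zero (hg0 : g 0 = 0) : ∫⁻ x, g ((0 : Lp ℝ 2 μ) x) ∂μ = 0 := by
  refine (lintegral_congr_ae ?_).trans lintegral_zero
  filter_upwards [Lp.coeFn_zero ℝ 2 μ] with x hx
  rw [hx, Pi.zero_apply, hg0]

theorem IsMinimizer.lintegral_ne_top (hmin : IsMinimizer S yd g β A u) (hg0 : g 0 = 0) :
    ∫⁻ x, g (u x) ∂μ ≠ ⊤ := by
  intro hu
  have h := hmin 0
  rw [Jfun_eq_top_of_lintegral_eq_top hu, Jfun_eq_coe_of_lintegral_ne_top (by rw [lintegral_comp_zero hg0]; simp),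
    top_le_iff] at h
  exact EReal.coe_ne_top _ h

theorem IsMinimizer.le_of_lintegral_ne_top (hmin : IsMinimizer S yd g β A u)
    (hu : ∫⁻ x, g (u x) ∂μ ≠ ⊤) (hv : ∫⁻ x, g (v x) ∂μ ≠ ⊤) :
    2⁻¹ * ‖S (chiMul A u) - yd‖ ^ 2 + (∫⁻ x, g (u x) ∂μ).toReal
      ≤ 2⁻¹ * ‖S (chiMul A v) - yd‖ ^ 2 + (∫⁻ x, g (v x) ∂μ).toReal := by
  have h := hmin v
  rw [Jfun_eq_coe_of_lintegral_ne_top hu, Jfun_eq_coe_of_lintegral_ne_top hv, EReal.coe_le_coe_iff] at h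
  linarith

theorem IsSolution.variational_inequality [CompleteSpace Y] {μ₀ : ℝ} {y : Y} {p : Lp ℝ 2 μ}
    (hsol : IsSolution S yd g β A u y p) (hA : MeasurableSet A) (hg : Measurable g)
    (hg0 : g 0 = 0) (hμ₀ : 0 ≤ μ₀) (hg_sconv : IsStronglyConvex μ₀ g)
    (hv : ∫⁻ x, g (v x) ∂μ ≠ ⊤) :
    μ₀ / 2 * ‖v - u‖ ^ 2 + (∫⁻ x, g (u x) ∂μ).toReal
      ≤ (∫⁻ x, g (v x) ∂μ).toReal + ⟪p, chiMul A (v - u)⟫_ℝ := by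
  obtain ⟨hmin, rfl, rfl⟩ := hsol
  have hu := hmin.lintegral_ne_top hg0
  refine le_of_forall_mem_Ioo_le_add_mul
    (c := 2⁻¹ * ‖S (chiMul A (v - u))‖ ^ 2 + μ₀ / 2 * ‖v - u‖ ^ 2) fun l hl => ?_
  obtain ⟨hw, hconv⟩ := toReal_lintegral_comp_combination_le hg hμ₀ hg_sconv hl hv hu
  have hmin_w := hmin.le_of_lintegral_ne_top hu hw
  have hstate : S (chiMul A (l • v + (1 - l) • u)) - yd
      = (S (chiMul A u) - yd) + l • S (chiMul A (v - u)) := by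
    rw [show l • v + (1 - l) • u = u + l • (v - u) by module, chiMul_add hA, chiMul_smul hA,
      map_add, map_smul]
    abel
  have hadj : ⟪S (chiMul A u) - yd, S (chiMul A (v - u))⟫_ℝ
      = ⟪ContinuousLinearMap.adjoint S (S (chiMul A u) - yd), chiMul A (v - u)⟫_ℝ :=
    (ContinuousLinearMap.adjoint_inner_left _ _ _).symm
  rw [hstate, norm_add_sq_real, real_inner_smul_right, norm_smul, mul_pow, Real.norm_eq_abs,
    sq_abs, hadj] at hmin_w
  have hscaled : l * (μ₀ / 2 * ‖v - u‖ ^ 2 + (∫⁻ x, g (u x) ∂μ).toReal)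
      ≤ l * ((∫⁻ x, g (v x) ∂μ).toReal
        + ⟪ContinuousLinearMap.adjoint S (S (chiMul A u) - yd), chiMul A (v - u)⟫_ℝ
        + l * (2⁻¹ * ‖S (chiMul A (v - u))‖ ^ 2 + μ₀ / 2 * ‖v - u‖ ^ 2)) := by
    linarith
  exact le_of_mul_le_mul_left hscaled hl.1

end Minimizer

end L0Control

open L0Control

theorem stability_inequality_general
    {d : ℕ} {Ω : Set (EuclideanSpace ℝ (Fin d))}
    {Y : Type*} [NormedAddCommGroup Y] [InnerProductSpace ℝ Y] [CompleteSpace Y]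
    (S : Lp ℝ 2 (volume.restrict Ω) →L[ℝ] Y) (yd : Y)
    (g : ℝ → ℝ≥0∞)
    (hg_lsc : LowerSemicontinuous g)
    (hg_zero : ∀ u : ℝ, g u = 0 ↔ u = 0)
    (β : EuclideanSpace ℝ (Fin d) → ℝ)
    (μ₀ : ℝ) (hμ₀ : 0 ≤ μ₀)
    (hg_sconv : ∀ u v l : ℝ, l ∈ Set.Ioo (0 : ℝ) 1 →
      ENNReal.ofReal (μ₀ / 2 * l * (1 - l) * (u - v) ^ 2) + g (l * u + (1 - l) * v)
        ≤ ENNReal.ofReal l * g u + ENNReal.ofReal (1 - l) * g v)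
    (A : Set (EuclideanSpace ℝ (Fin d))) (hAm : MeasurableSet A)
    (B : Set (EuclideanSpace ℝ (Fin d))) (hBm : MeasurableSet B)
    (uA : Lp ℝ 2 (volume.restrict Ω)) (yA : Y) (pA : Lp ℝ 2 (volume.restrict Ω))
    (hsolA : IsSolution S yd g β A uA yA pA)
    (uB : Lp ℝ 2 (volume.restrict Ω)) (yB : Y) (pB : Lp ℝ 2 (volume.restrict Ω))
    (hsolB : IsSolution S yd g β B uB yB pB)
    :
    μ₀ * ‖uB - uA‖ ^ 2 + ‖yB - yA‖ ^ 2
      ≤ ∫ x, (chi A x - chi B x) * (pA x * uB x - pB x * uA x) ∂(volume.restrict Ω) := by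
  have hg := hg_lsc.measurable
  have hg0 : g 0 = 0 := (hg_zero 0).2 rfl
  have hVA := hsolA.variational_inequality hAm hg hg0 hμ₀ hg_sconv (hsolB.1.lintegral_ne_top hg0)
  have hVB := hsolB.variational_inequality hBm hg hg0 hμ₀ hg_sconv (hsolA.1.lintegral_ne_top hg0)
  have hY : ‖yB - yA‖ ^ 2 = ⟪pA - pB, chiMul A uA - chiMul B uB⟫_ℝ := by
    rw [hsolA.2.2, hsolB.2.2, hsolA.2.1, hsolB.2.1, inner_adjoint_sub_adjoint, norm_sub_rev]
  rw [norm_sub_rev uA] at hVB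
  rw [integral_chi_sub_chi_mul hAm hBm]
  simp only [chiMul_sub hAm, chiMul_sub hBm, inner_sub_left, inner_sub_right] at hVA hVB hY ⊢
  linarith

/-- Stability estimate:
`μ‖u_B − u_A‖² + ‖y_B − y_A‖² ≤ ∫_Ω (χ_A − χ_B)(p_A u_B − p_B u_A) dx`,
with `μ ≥ 0` the strong convexity modulus of `g`. -/
theorem stability_inequality
    {d : ℕ} {Ω : Set (EuclideanSpace ℝ (Fin d))}
    (hΩm : MeasurableSet Ω) (hΩfin : volume Ω < ⊤)
    {Y : Type*} [NormedAddCommGroup Y] [InnerProductSpace ℝ Y] [CompleteSpace Y]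
    (S : Lp ℝ 2 (volume.restrict Ω) →L[ℝ] Y) (yd : Y)
    (g : ℝ → ℝ≥0∞)
    (hg_proper : ∃ u : ℝ, g u ≠ ⊤)
    (hg_lsc : LowerSemicontinuous g)
    (hg_zero : ∀ u : ℝ, g u = 0 ↔ u = 0)
    (β : EuclideanSpace ℝ (Fin d) → ℝ)
    (hβ : Integrable β (volume.restrict Ω))
    (μ₀ : ℝ) (hμ₀ : 0 ≤ μ₀)
    (hg_sconv : ∀ u v l : ℝ, l ∈ Set.Ioo (0 : ℝ) 1 →
      ENNReal.ofReal (μ₀ / 2 * l * (1 - l) * (u - v) ^ 2) + g (l * u + (1 - l) * v)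
        ≤ ENNReal.ofReal l * g u + ENNReal.ofReal (1 - l) * g v)
    (A : Set (EuclideanSpace ℝ (Fin d))) (hAm : MeasurableSet A) (hAΩ : A ⊆ Ω)
    (B : Set (EuclideanSpace ℝ (Fin d))) (hBm : MeasurableSet B) (hBΩ : B ⊆ Ω)
    (uA : Lp ℝ 2 (volume.restrict Ω)) (yA : Y) (pA : Lp ℝ 2 (volume.restrict Ω))
    (hsolA : IsSolution S yd g β A uA yA pA)
    (uB : Lp ℝ 2 (volume.restrict Ω)) (yB : Y) (pB : Lp ℝ 2 (volume.restrict Ω))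
    (hsolB : IsSolution S yd g β B uB yB pB)
    :
    μ₀ * ‖uB - uA‖ ^ 2 + ‖yB - yA‖ ^ 2
      ≤ ∫ x, (chi A x - chi B x) * (pA x * uB x - pB x * uA x) ∂(volume.restrict Ω) :=
  stability_inequality_general S yd g hg_lsc hg_zero β μ₀ hμ₀ hg_sconv A hAm B hBm uA yA pA hsolA uB
    yB pB hsolB
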